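/- In the setting of the coKähler extension, the almost complex structure J(X,a) = (ΦX - aξ, η(X)) on g = h ⋊_D ℝ satisfies J² = -id and has vanishing Nijenhuis tensor, using that Φξ=0, η∘Φ=0, Nij_Φ = 0, dη = 0, Dξ = 0, Dη = 0, and DΦ = ΦD. -/

import Mathlib

/-! `J` squares to `-id` because `Φ² = -id + η ⊗ ξ` exactly compensates the `ℝ`-factor. For the
Nijenhuis tensor, write `u = (x, a)`, `v = (y, b)`: the `ℝ`-component vanishes since `η` kills
brackets, `Φ` and `D`; the `h`-component reduces, using `Φ² = -id` on `ker η ⊇ [h, h] + D h` and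
`DΦ = ΦD`, to `Nij_Φ(x, y) = 0` together with `Φ ∘ ad ξ = ad ξ ∘ Φ`, which is itself `Nij_Φ(ξ, ·) = 0`. -/

namespace NormalAlmostContact

variable {R H : Type*} [CommRing R] [LieRing H] [LieAlgebra R H]
  {η : H →ₗ[R] R} {ξ : H} {Φ : H →ₗ[R] H}

theorem apply_apply_of_eta_eq_zero (hΦ2 : ∀ x, Φ (Φ x) = -x + η x • ξ) {x : H} (hx : η x = 0) :
    Φ (Φ x) = -x := by
  rw [hΦ2, hx, zero_smul, add_zero]

section Nijenhuis

variable (hΦ2 : ∀ x, Φ (Φ x) = -x + η x • ξ)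
  (hNijΦ : ∀ x y : H, Φ (Φ ⁅x, y⁆) + ⁅Φ x, Φ y⁆ - Φ ⁅Φ x, y⁆ - Φ ⁅x, Φ y⁆ = 0)
  (hdη : ∀ x y : H, η ⁅x, y⁆ = 0)
include hΦ2 hNijΦ hdη

theorem map_lie_add_map_lie_sub_lie_map (x y : H) :
    Φ ⁅Φ x, y⁆ + Φ ⁅x, Φ y⁆ - ⁅Φ x, Φ y⁆ = -⁅x, y⁆ := by
  have key := hNijΦ x y
  rw [apply_apply_of_eta_eq_zero hΦ2 (hdη x y)] at key
  linear_combination (norm := module) -key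

variable (hΦξ : Φ ξ = 0)
include hΦξ

theorem map_lie_xi_left (z : H) : Φ ⁅ξ, z⁆ = ⁅ξ, Φ z⁆ := by
  have key := hNijΦ ξ z
  rw [hΦξ, zero_lie, zero_lie, map_zero] at key
  have hΦΦ : Φ (Φ ⁅ξ, z⁆) = Φ ⁅ξ, Φ z⁆ := by linear_combination (norm := module) key
  have hneg := congrArg Φ hΦΦ
  rw [apply_apply_of_eta_eq_zero hΦ2 (hdη _ _), apply_apply_of_eta_eq_zero hΦ2 (hdη _ _),
    map_neg] at hneg
  exact neg_inj.mp hneg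

theorem map_lie_xi_right (x : H) : Φ ⁅x, ξ⁆ = ⁅Φ x, ξ⁆ := by
  rw [← lie_skew x ξ, map_neg, map_lie_xi_left hΦ2 hNijΦ hdη hΦξ, lie_skew]

end Nijenhuis

end NormalAlmostContact

section CoKahlerExtension

open NormalAlmostContact

variable {R H : Type*} [CommRing R] [LieRing H] [LieAlgebra R H]

/-- The bracket of `h ⋊_D R`; only its underlying map `(H × R)² → H × R` is needed. -/
def semidirectBracket (D : H →ₗ[R] H) (u v : H × R) : H × R :=
  (⁅u.1, v.1⁆ + u.2 • D v.1 - v.2 • D u.1, 0)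

def extensionJ (η : H →ₗ[R] R) (ξ : H) (Φ : H →ₗ[R] H) (u : H × R) : H × R :=
  (Φ u.1 - u.2 • ξ, η u.1)

variable {η : H →ₗ[R] R} {ξ : H} {Φ : H →ₗ[R] H}

theorem extensionJ_extensionJ (hηξ : η ξ = 1) (hΦ2 : ∀ x, Φ (Φ x) = -x + η x • ξ)
    (hΦξ : Φ ξ = 0) (hηΦ : ∀ x, η (Φ x) = 0) (u : H × R) :
    extensionJ η ξ Φ (extensionJ η ξ Φ u) = -u := by
  ext <;> simp [extensionJ, hΦ2, hΦξ, hηΦ, hηξ]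

theorem nijenhuis_extensionJ_eq_zero {D : H →ₗ[R] H}
    (hΦ2 : ∀ x, Φ (Φ x) = -x + η x • ξ) (hΦξ : Φ ξ = 0) (hηΦ : ∀ x, η (Φ x) = 0)
    (hNijΦ : ∀ x y : H, Φ (Φ ⁅x, y⁆) + ⁅Φ x, Φ y⁆ - Φ ⁅Φ x, y⁆ - Φ ⁅x, Φ y⁆ = 0)
    (hdη : ∀ x y : H, η ⁅x, y⁆ = 0) (hDξ : D ξ = 0) (hDη : ∀ x, η (D x) = 0)
    (hDΦ : ∀ x, D (Φ x) = Φ (D x)) (u v : H × R) :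
    -(semidirectBracket D u v)
        + semidirectBracket D (extensionJ η ξ Φ u) (extensionJ η ξ Φ v)
        - extensionJ η ξ Φ (semidirectBracket D (extensionJ η ξ Φ u) v)
        - extensionJ η ξ Φ (semidirectBracket D u (extensionJ η ξ Φ v)) = 0 := by
  obtain ⟨x, a⟩ := u
  obtain ⟨y, b⟩ := v
  ext
  · simp only [extensionJ, semidirectBracket, Prod.fst_add, Prod.fst_sub, Prod.fst_neg,
      Prod.fst_zero, map_sub, map_add, map_smul, hηΦ, hdη, hDη, hDΦ, hDξ, lie_sub, sub_lie,
      lie_smul, smul_lie, lie_self, smul_zero, sub_zero, zero_smul, smul_eq_mul, mul_zero]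
    linear_combination (norm := module)
      -map_lie_add_map_lie_sub_lie_map hΦ2 hNijΦ hdη x y
        + a • map_lie_xi_left hΦ2 hNijΦ hdη hΦξ y + b • map_lie_xi_right hΦ2 hNijΦ hdη hΦξ x
        + b • apply_apply_of_eta_eq_zero hΦ2 (hDη x) - a • apply_apply_of_eta_eq_zero hΦ2 (hDη y)
  · simp [extensionJ, semidirectBracket, hdη, hDη]

end CoKahlerExtension

theorem stmt13_general (H : Type*) [LieRing H] [LieAlgebra ℝ H]
    (η : H →ₗ[ℝ] ℝ) (ξ : H) (Φ : H →ₗ[ℝ] H) (D : H →ₗ[ℝ] H)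
    (hηξ : η ξ = 1)
    (hΦ2 : ∀ x : H, Φ (Φ x) = -x + η x • ξ)
    (hΦξ : Φ ξ = 0) (hηΦ : ∀ x : H, η (Φ x) = 0)
    (hNijΦ : ∀ x y : H,
      Φ (Φ ⁅x, y⁆) + ⁅Φ x, Φ y⁆ - Φ ⁅Φ x, y⁆ - Φ ⁅x, Φ y⁆ = 0)
    (hdη : ∀ x y : H, η ⁅x, y⁆ = 0)
    (hDξ : D ξ = 0) (hDη : ∀ x : H, η (D x) = 0)
    (hDΦ : ∀ x : H, D (Φ x) = Φ (D x))
    (br : H × ℝ → H × ℝ → H × ℝ)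
    (hbr : ∀ u v : H × ℝ, br u v = (⁅u.1, v.1⁆ + u.2 • D v.1 - v.2 • D u.1, 0))
    (J : H × ℝ → H × ℝ)
    (hJ : ∀ u : H × ℝ, J u = (Φ u.1 - u.2 • ξ, η u.1)) :
    (∀ u : H × ℝ, J (J u) = -u) ∧
    (∀ u v : H × ℝ,
      -(br u v) + br (J u) (J v) - J (br (J u) v) - J (br u (J v)) = 0) := by
  obtain rfl : br = semidirectBracket D := funext₂ hbr
  obtain rfl : J = extensionJ η ξ Φ := funext hJ
  exact ⟨extensionJ_extensionJ hηξ hΦ2 hΦξ hηΦ,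
    nijenhuis_extensionJ_eq_zero hΦ2 hΦξ hηΦ hNijΦ hdη hDξ hDη hDΦ⟩

/-- In the coKähler extension `g = h ⋊_D ℝ`, the almost complex structure
`J(X,a) = (ΦX - aξ, η(X))` satisfies `J² = -id` and has vanishing Nijenhuis
tensor, using `Φξ = 0`, `η∘Φ = 0`, `Nij_Φ = 0`, `dη = 0`, `Dξ = 0`, `Dη = 0`,
`DΦ = ΦD`. -/
theorem stmt13 (H : Type*) [LieRing H] [LieAlgebra ℝ H]
    (η : H →ₗ[ℝ] ℝ) (ξ : H) (Φ : H →ₗ[ℝ] H) (D : H →ₗ[ℝ] H)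
    (hηξ : η ξ = 1)
    (hΦ2 : ∀ x : H, Φ (Φ x) = -x + η x • ξ)
    (hΦξ : Φ ξ = 0) (hηΦ : ∀ x : H, η (Φ x) = 0)
    (hNijΦ : ∀ x y : H,
      Φ (Φ ⁅x, y⁆) + ⁅Φ x, Φ y⁆ - Φ ⁅Φ x, y⁆ - Φ ⁅x, Φ y⁆ = 0)
    (hdη : ∀ x y : H, η ⁅x, y⁆ = 0)
    (hD : ∀ x y : H, D ⁅x, y⁆ = ⁅D x, y⁆ + ⁅x, D y⁆)
    (hDξ : D ξ = 0) (hDη : ∀ x : H, η (D x) = 0)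
    (hDΦ : ∀ x : H, D (Φ x) = Φ (D x))
    (br : H × ℝ → H × ℝ → H × ℝ)
    (hbr : ∀ u v : H × ℝ, br u v = (⁅u.1, v.1⁆ + u.2 • D v.1 - v.2 • D u.1, 0))
    (J : H × ℝ → H × ℝ)
    (hJ : ∀ u : H × ℝ, J u = (Φ u.1 - u.2 • ξ, η u.1)) :
    (∀ u : H × ℝ, J (J u) = -u) ∧
    (∀ u v : H × ℝ,
      -(br u v) + br (J u) (J v) - J (br (J u) v) - J (br u (J v)) = 0) :=
  stmt13_general H η ξ Φ D hηξ hΦ2 hΦξ hηΦ hNijΦ hdη hDξ hDη hDΦ br hbr J hJ
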